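/- A signed graph Σ is balanced if and only if its vertex set admits a bipartition V = V1 ∪ V2 (either part possibly empty) such that every positive edge joins two vertices in the same part and every negative edge joins a vertex of V1 to a vertex of V2. -/
import Mathlib

/-- The product of edge signs along a walk in a graph with edge signature `σ`. -/
def walkSign {V : Type*} (σ : V → V → ℤˣ) {G : SimpleGraph V} {u v : V}
    (w : G.Walk u v) : ℤˣ :=
  (w.darts.map (fun d => σ d.toProd.1 d.toProd.2)).prod

section Aux

open SimpleGraph

variable {V : Type*} {G : SimpleGraph V} (σ : V → V → ℤˣ)

lemma walkSign_nil {v : V} : walkSign σ (Walk.nil : G.Walk v v) = 1 := rfl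

lemma walkSign_cons {u v w : V} (h : G.Adj u v) (p : G.Walk v w) :
    walkSign σ (Walk.cons h p) = σ u v * walkSign σ p := by
  simp [walkSign]

lemma walkSign_append {u v w : V} (p : G.Walk u v) (q : G.Walk v w) :
    walkSign σ (p.append q) = walkSign σ p * walkSign σ q := by
  simp [walkSign, Walk.darts_append]

lemma walkSign_copy {u v u' v' : V} (p : G.Walk u v) (hu : u = u') (hv : v = v') :
    walkSign σ (p.copy hu hv) = walkSign σ p := by
  simp [walkSign, Walk.darts_copy]

lemma walkSign_concat {u v w : V} (p : G.Walk u v) (h : G.Adj v w) :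
    walkSign σ (p.concat h) = walkSign σ p * σ v w := by
  simp [walkSign, Walk.darts_concat]

lemma walkSign_reverse (hsym : ∀ u v, σ u v = σ v u) {u v : V} (p : G.Walk u v) :
    walkSign σ p.reverse = walkSign σ p := by
  simp only [walkSign, Walk.darts_reverse, List.map_reverse, List.prod_reverse,
    List.map_map]
  congr 1
  apply List.map_congr_left
  intro d _
  exact (hsym d.toProd.1 d.toProd.2).symm

lemma closedWalk_sign (hsym : ∀ u v, σ u v = σ v u)
    (hc : ∀ (v : V) (w : G.Walk v v), w.IsCycle → walkSign σ w = 1) :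
    ∀ (n : ℕ) (v : V) (w : G.Walk v v), w.length ≤ n → walkSign σ w = 1 := by
  classical
  intro n
  induction n with
  | zero =>
    intro v w hw
    cases w with
    | nil => rfl
    | cons h p => simp [Walk.length_cons] at hw
  | succ n ih =>
    intro v w hw
    cases w with
    | nil => rfl
    | cons h p =>
      rename_i u
      -- h : G.Adj v u, p : G.Walk u v
      by_cases hcyc : (Walk.cons h p).IsCycle
      · exact hc _ _ hcyc
      rw [Walk.cons_isCycle_iff] at hcyc
      push_neg at hcyc
      rw [Walk.length_cons] at hw
      by_cases hp : p.IsPath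
      · -- the walk backtracks along its first edge
        have he : s(v, u) ∈ p.edges := hcyc hp
        cases p with
        | nil => simp at he
        | cons h'' p'' =>
          rename_i w'
          rw [Walk.edges_cons, List.mem_cons] at he
          rcases he with he | he
          · rw [Sym2.eq_iff] at he
            rcases he with ⟨hvu, -⟩ | ⟨hvw, -⟩
            · exact absurd hvu h.ne
            · subst hvw
              have hp'' : p''.IsPath := hp.of_cons
              cases p'' with
              | nil =>
                rw [walkSign_cons, walkSign_cons, walkSign_nil, mul_one,
                  hsym u v, Int.units_mul_self]
              | cons h3 q =>
                exfalso
                have hnd := hp''.support_nodup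
                rw [Walk.support_cons] at hnd
                exact (List.nodup_cons.mp hnd).1 q.end_mem_support
          · exfalso
            have hu : u ∈ p''.support := p''.snd_mem_support_of_mem_edges he
            have hnd := hp.support_nodup
            rw [Walk.support_cons] at hnd
            exact (List.nodup_cons.mp hnd).1 hu
      · -- p has a repeated vertex
        have hnd : ¬ p.support.Nodup := by rwa [Walk.isPath_def] at hp
        obtain ⟨x, hdup⟩ := List.exists_duplicate_iff_not_nodup.mpr hnd
        have hx : x ∈ p.support := hdup.mem
        have hcount : 2 ≤ p.support.count x := List.duplicate_iff_two_le_count.mp hdup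
        have hsp : walkSign σ p =
            walkSign σ (p.takeUntil x hx) * walkSign σ (p.dropUntil x hx) := by
          conv_lhs => rw [← p.take_spec hx]
          rw [walkSign_append]
        have hlen : (p.takeUntil x hx).length + (p.dropUntil x hx).length = p.length := by
          have := congrArg Walk.length (p.take_spec hx)
          rw [Walk.length_append] at this
          exact this
        have hcount2 : p.support.count x =
            (p.takeUntil x hx).support.count x + (p.dropUntil x hx).support.tail.count x := by
          conv_lhs => rw [← p.take_spec hx]
          rw [Walk.support_append, List.count_append]
        have h1 : (p.takeUntil x hx).support.count x = 1 :=
          p.count_support_takeUntil_eq_one hx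
        have hdx : x ∈ (p.dropUntil x hx).support.tail := by
          have : 0 < (p.dropUntil x hx).support.tail.count x := by omega
          exact List.count_pos_iff.mp this
        have htail_len : (p.dropUntil x hx).support.tail.length =
            (p.dropUntil x hx).length := by
          rw [List.length_tail, Walk.length_support]; omega
        have hdrop_pos : 0 < (p.dropUntil x hx).length := by
          have := List.length_pos_iff.mpr (List.ne_nil_of_mem hdx)
          omega
        by_cases hxv : x = v
        · subst hxv
          rw [walkSign_cons, hsp, ← mul_assoc]
          have e1 := ih _ (Walk.cons h (p.takeUntil x hx)) (by rw [Walk.length_cons]; omega)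
          rw [walkSign_cons] at e1
          have e2 := ih _ (p.dropUntil x hx) (by omega)
          rw [e1, one_mul, e2]
        · -- x ≠ v : the drop part is nonempty, split off a closed walk at x
          have hnn : ¬ (p.dropUntil x hx).Nil := by
            intro hnil
            rw [Walk.nil_iff_length_eq] at hnil
            omega
          obtain ⟨y, h', e, hde⟩ := Walk.not_nil_iff.mp hnn
          have hx' : x ∈ e.support := by
            have := hdx
            rw [hde, Walk.support_cons, List.tail_cons] at this
            exact this
          have hse : walkSign σ e =
              walkSign σ (e.takeUntil x hx') * walkSign σ (e.dropUntil x hx') := by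
            conv_lhs => rw [← e.take_spec hx']
            rw [walkSign_append]
          have helen : (e.takeUntil x hx').length + (e.dropUntil x hx').length = e.length := by
            have := congrArg Walk.length (e.take_spec hx')
            rw [Walk.length_append] at this
            exact this
          have hdlen : (p.dropUntil x hx).length = e.length + 1 := by
            rw [hde, Walk.length_cons]
          have e1 : σ x y * walkSign σ (e.takeUntil x hx') = 1 := by
            rw [← walkSign_cons σ h']
            exact ih x (Walk.cons h' (e.takeUntil x hx'))
              (by rw [Walk.length_cons]; omega)
          have e2 : σ v u * (walkSign σ (p.takeUntil x hx) *
              walkSign σ (e.dropUntil x hx')) = 1 := by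
            rw [← walkSign_append, ← walkSign_cons σ h]
            exact ih v (Walk.cons h ((p.takeUntil x hx).append (e.dropUntil x hx')))
              (by rw [Walk.length_cons, Walk.length_append]; omega)
          rw [walkSign_cons, hsp, hde, walkSign_cons σ h', hse]
          calc σ v u * (walkSign σ (p.takeUntil x hx) *
                (σ x y * (walkSign σ (e.takeUntil x hx') * walkSign σ (e.dropUntil x hx'))))
              = (σ v u * (walkSign σ (p.takeUntil x hx) * walkSign σ (e.dropUntil x hx'))) *
                (σ x y * walkSign σ (e.takeUntil x hx')) := by
                simp [mul_comm, mul_left_comm, mul_assoc]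
            _ = 1 := by rw [e1, e2, mul_one]

end Aux

/-- Harary's theorem: a signed graph is balanced (every cycle has positive sign product)
    iff the vertex set has a bipartition such that positive edges lie within a part and
    negative edges join the two parts. -/
theorem balanced_iff_bipartition {V : Type*} (G : SimpleGraph V) (σ : V → V → ℤˣ)
    (hsym : ∀ u v, σ u v = σ v u) :
    (∀ (v : V) (w : G.Walk v v), w.IsCycle → walkSign σ w = 1) ↔
      ∃ f : V → Bool, ∀ u v : V, G.Adj u v → (σ u v = 1 ↔ f u = f v) := by
  classical
  constructor
  · intro hc
    have hclosed : ∀ (v : V) (w : G.Walk v v), walkSign σ w = 1 :=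
      fun v w => closedWalk_sign σ hsym hc w.length v w le_rfl
    have huniq : ∀ {a b : V} (w q : G.Walk a b), walkSign σ w = walkSign σ q := by
      intro a b w q
      have h1 : walkSign σ (w.append q.reverse) = 1 := hclosed _ _
      rw [walkSign_append, walkSign_reverse σ hsym] at h1
      have h2 := Int.units_mul_self (walkSign σ q)
      exact mul_right_cancel (h1.trans h2.symm)
    have hreach : ∀ v : V, G.Reachable ((G.connectedComponentMk v).out) v := fun v =>
      SimpleGraph.ConnectedComponent.exact (Quot.out_eq _)
    let p : ∀ v : V, G.Walk ((G.connectedComponentMk v).out) v := fun v =>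
      Classical.choice (hreach v)
    refine ⟨fun v => decide (walkSign σ (p v) = 1), ?_⟩
    intro a b hab
    have hrep : (G.connectedComponentMk a).out = (G.connectedComponentMk b).out := by
      rw [SimpleGraph.ConnectedComponent.connectedComponentMk_eq_of_adj hab]
    have hkey : walkSign σ (p b) = walkSign σ (p a) * σ a b := by
      have := huniq (p b) (((p a).concat hab).copy hrep rfl)
      rw [walkSign_copy, walkSign_concat] at this
      exact this
    rcases Int.units_eq_one_or (σ a b) with h1 | h1 <;>
      rcases Int.units_eq_one_or (walkSign σ (p a)) with h2 | h2 <;>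
        rw [h1, h2] at hkey <;>
          simp only [h1, h2, hkey] <;> norm_num
  · rintro ⟨f, hf⟩ v w _
    have key : ∀ {a b : V} (q : G.Walk a b),
        walkSign σ q = (if f a then 1 else -1) * (if f b then 1 else -1) := by
      intro a b q
      induction q with
      | nil => rw [walkSign_nil, Int.units_mul_self]
      | cons h q ihq =>
        rename_i c d e
        have hedge : σ c d = (if f c then 1 else -1) * (if f d then 1 else -1) := by
          rcases Int.units_eq_one_or (σ c d) with h1 | h1
          · have heq := (hf _ _ h).mp h1
            rw [h1, heq, Int.units_mul_self]
          · have hne : f c ≠ f d := fun hh => by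
              have := (hf _ _ h).mpr hh
              rw [h1] at this
              exact absurd this (by decide)
            rw [h1]
            cases hfc : f c <;> cases hfd : f d <;>
              simp_all
        rw [walkSign_cons, ihq, hedge]
        have := Int.units_mul_self (if f d then (1 : ℤˣ) else -1)
        calc ((if f c then (1:ℤˣ) else -1) * (if f d then 1 else -1)) *
              ((if f d then (1:ℤˣ) else -1) * (if f e then 1 else -1))
            = (if f c then (1:ℤˣ) else -1) *
              (((if f d then (1:ℤˣ) else -1) * (if f d then 1 else -1)) *
                (if f e then 1 else -1)) := by
              simp [mul_comm, mul_left_comm, mul_assoc]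
          _ = (if f c then (1:ℤˣ) else -1) * (if f e then 1 else -1) := by
              rw [this, one_mul]
    rw [key w, Int.units_mul_self]
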